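/- arXiv:1305.4058 — 8 statements merged into one kernel-verified Lean document; each statement's English description precedes it below -/
import Mathlib

section
/- Let x : [0,∞) → ℝ^d be càdlàg and t ≥ 0. Then f(x)(t) ≠ x(t) if and only if the following three conditions hold simultaneously: x is constant on the open interval (η_x(t), θ_x(t)), η_x(t) < t < θ_x(t) < ∞, and θ_x(t) ∈ disc(x). -/
/-!
Between `η = η_x(t)` and `t` the path `x` equals `x(t)`, and by right continuity so does `x(η)`;
between `t` and `θ = θ_x(t)` it equals `x(t−)`, which is `x(t)` as soon as `η < t`. So when
`η < t` and `θ < ∞`, `x` is constant equal to `x(t)` on `(η, θ)`, its left limit at `θ` is `x(t)`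
(if `t < θ`), and `f(x)(t) = x(t) + λ (x(θ) − x(t))` with `λ = (t − η)/(θ − η) > 0`. Hence
`f(x)(t) ≠ x(t)` exactly when `x` jumps at `θ`; in every other case `f(x)(t) = x(t)`.
-/

open scoped NNReal ENNReal Classical
open Filter Topology

noncomputable section

/-- Left limit of `x` at `t`, with the convention `x(0−) = x(0)`. -/
def leftLimit {d : ℕ} (x : ℝ≥0 → Fin d → ℝ) (t : ℝ≥0) : Fin d → ℝ :=
  if 0 < t then limUnder (nhdsWithin t (Set.Iio t)) x else x 0

/-- `x : [0,∞) → ℝ^d` is càdlàg: right-continuous everywhere, with left limits at every `t > 0`. -/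
def IsCadlag {d : ℕ} (x : ℝ≥0 → Fin d → ℝ) : Prop :=
  (∀ t : ℝ≥0, ContinuousWithinAt x (Set.Ici t) t) ∧
  (∀ t : ℝ≥0, 0 < t →
    ∃ L : Fin d → ℝ, Filter.Tendsto x (nhdsWithin t (Set.Iio t)) (nhds L))

/-- `x` is constant on the set `I`. -/
def ConstOn {d : ℕ} (x : ℝ≥0 → Fin d → ℝ) (I : Set ℝ≥0) : Prop :=
  ∀ s ∈ I, ∀ s' ∈ I, x s = x s'

/-- `η_x(t) = sup {s ∈ [0,t) : x(s) ≠ x(t)}`, with the convention `sup ∅ = 0`. -/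
def eta {d : ℕ} (x : ℝ≥0 → Fin d → ℝ) (t : ℝ≥0) : ℝ≥0 :=
  sSup {s : ℝ≥0 | s < t ∧ x s ≠ x t}

/-- The set of discontinuity points of `x`: the `t > 0` where `x(t) ≠ x(t−)`. -/
def disc {d : ℕ} (x : ℝ≥0 → Fin d → ℝ) : Set ℝ≥0 :=
  {t : ℝ≥0 | 0 < t ∧ x t ≠ leftLimit x t}

/-- `θ_x(t) = inf {s ≥ t : x(s) ≠ x(t−)} ∈ [0,∞]`, with the convention `inf ∅ = ∞`. -/
def theta {d : ℕ} (x : ℝ≥0 → Fin d → ℝ) (t : ℝ≥0) : ℝ≥0∞ :=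
  sInf ((fun s : ℝ≥0 => (s : ℝ≥0∞)) '' {s : ℝ≥0 | t ≤ s ∧ x s ≠ leftLimit x t})

/-- The map `f` replacing each "stair" of `x` by the linear interpolation of its endpoints:
`f(x)(t) = x(η_x(t)) + ((t − η_x(t))/(θ_x(t) − η_x(t))) • (x(θ_x(t)) − x(η_x(t)))`,
with `f(x)(t) = x(t)` when `θ_x(t) = η_x(t)` or `θ_x(t) = ∞`. -/
def fmap {d : ℕ} (x : ℝ≥0 → Fin d → ℝ) : ℝ≥0 → Fin d → ℝ := fun t =>
  if theta x t = ((eta x t : ℝ≥0) : ℝ≥0∞) ∨ theta x t = ⊤ then x t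
  else x (eta x t) +
    (((t : ℝ) - (eta x t : ℝ)) / ((theta x t).toReal - (eta x t : ℝ))) •
      (x (theta x t).toNNReal - x (eta x t))

/-- The space `D` of càdlàg functions `[0,∞) → ℝ^d`. -/
def Cadlag (d : ℕ) : Type := {x : ℝ≥0 → Fin d → ℝ // IsCadlag x}

/-- The Kolmogorov σ-algebra on `D`: the trace of the σ-algebra generated by the coordinate
evaluation maps `x ↦ x(t)`, `t ≥ 0` (i.e. of the product σ-algebra). -/
instance (d : ℕ) : MeasurableSpace (Cadlag d) :=
  MeasurableSpace.comap (fun x : Cadlag d => x.1)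
    (inferInstance : MeasurableSpace (ℝ≥0 → Fin d → ℝ))

section StairEndpoints

variable {d : ℕ} {x : ℝ≥0 → Fin d → ℝ} {t : ℝ≥0}

theorem leftLimit_eq_of_eqOn_Ioo {a u : ℝ≥0} {c : Fin d → ℝ} (hau : a < u)
    (h : ∀ s ∈ Set.Ioo a u, x s = c) : leftLimit x u = c := by
  have hu : 0 < u := pos_of_gt hau
  have : (𝓝[<] u).NeBot := nhdsLT_neBot_of_exists_lt ⟨0, hu⟩
  have hlim : Tendsto x (𝓝[<] u) (𝓝 c) :=
    tendsto_const_nhds.congr' (eventually_of_mem (Ioo_mem_nhdsLT hau) fun s hs => (h s hs).symm)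
  rw [leftLimit, if_pos hu]
  exact hlim.limUnder_eq

theorem eta_le : eta x t ≤ t :=
  csSup_le' fun _ hs => hs.1.le

theorem le_theta : (t : ℝ≥0∞) ≤ theta x t := by
  refine le_sInf ?_
  rintro _ ⟨s, ⟨hts, _⟩, rfl⟩
  exact ENNReal.coe_le_coe.2 hts

theorem le_toNNReal_theta (hθ : theta x t ≠ ⊤) : t ≤ (theta x t).toNNReal := by
  simpa using ENNReal.toNNReal_mono hθ le_theta

theorem eq_of_eta_lt_of_lt {s : ℝ≥0} (hηs : eta x t < s) (hst : s < t) : x s = x t := by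
  by_contra hne
  have hsη : s ≤ eta x t := le_csSup ⟨t, fun _ hu => hu.1.le⟩ ⟨hst, hne⟩
  exact hsη.not_gt hηs

theorem eq_leftLimit_of_le_of_lt_theta {s : ℝ≥0} (hts : t ≤ s) (hsθ : (s : ℝ≥0∞) < theta x t) :
    x s = leftLimit x t := by
  by_contra hne
  have hθs : theta x t ≤ s := sInf_le ⟨s, ⟨hts, hne⟩, rfl⟩
  exact hθs.not_gt hsθ

theorem apply_eta_of_eta_lt (hx : ContinuousWithinAt x (Set.Ici (eta x t)) (eta x t))
    (hη : eta x t < t) : x (eta x t) = x t := by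
  have hright : Tendsto x (𝓝[>] (eta x t)) (𝓝 (x t)) :=
    tendsto_const_nhds.congr' (eventually_of_mem (Ioo_mem_nhdsGT hη)
      fun s hs => (eq_of_eta_lt_of_lt hs.1 hs.2).symm)
  exact tendsto_nhds_unique (hx.mono Set.Ioi_subset_Ici_self) hright

theorem leftLimit_eq_of_eta_lt (hη : eta x t < t) : leftLimit x t = x t :=
  leftLimit_eq_of_eqOn_Ioo hη fun _ hs => eq_of_eta_lt_of_lt hs.1 hs.2

theorem eq_on_Ioo_eta_theta (hη : eta x t < t) {s : ℝ≥0}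
    (hs : s ∈ Set.Ioo (eta x t) (theta x t).toNNReal) : x s = x t := by
  rcases lt_or_ge s t with hst | hts
  · exact eq_of_eta_lt_of_lt hs.1 hst
  · have hsθ : (s : ℝ≥0∞) < theta x t :=
      (ENNReal.coe_lt_coe.2 hs.2).trans_le ENNReal.coe_toNNReal_le_self
    rw [eq_leftLimit_of_le_of_lt_theta hts hsθ, leftLimit_eq_of_eta_lt hη]

theorem constOn_Ioo_eta_theta (hη : eta x t < t) :
    ConstOn x (Set.Ioo (eta x t) (theta x t).toNNReal) := fun _ hs _ hs' => by
  rw [eq_on_Ioo_eta_theta hη hs, eq_on_Ioo_eta_theta hη hs']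

theorem mem_disc_theta_iff (hη : eta x t < t) (hθ : t < (theta x t).toNNReal) :
    (theta x t).toNNReal ∈ disc x ↔ x (theta x t).toNNReal ≠ x t := by
  rw [disc, Set.mem_ofPred_eq, leftLimit_eq_of_eqOn_Ioo (hη.trans hθ) fun _ hs =>
    eq_on_Ioo_eta_theta hη hs]
  exact and_iff_right (pos_of_gt hθ)

theorem fmap_eq_self_of_eta_eq (hη : eta x t = t) : fmap x t = x t := by
  unfold fmap
  split_ifs <;> simp [hη]

theorem fmap_eq_self_of_theta_eq_top (hθ : theta x t = ⊤) : fmap x t = x t := by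
  unfold fmap
  rw [if_pos (Or.inr hθ)]

theorem fmap_eq_of_eta_lt (hx : ContinuousWithinAt x (Set.Ici (eta x t)) (eta x t))
    (hη : eta x t < t) (hθ : theta x t ≠ ⊤) :
    fmap x t = x t + (((t : ℝ) - eta x t) / ((theta x t).toReal - eta x t)) •
      (x (theta x t).toNNReal - x t) := by
  have hηθ : theta x t ≠ (eta x t : ℝ≥0∞) :=
    ((ENNReal.coe_lt_coe.2 hη).trans_le le_theta).ne'
  unfold fmap
  rw [if_neg (not_or.2 ⟨hηθ, hθ⟩), apply_eta_of_eta_lt hx hη]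

theorem interpolation_coeff_pos (hη : eta x t < t) (hθ : theta x t ≠ ⊤) :
    0 < ((t : ℝ) - eta x t) / ((theta x t).toReal - eta x t) := by
  have hηt : (eta x t : ℝ) < t := hη
  have htθ : (t : ℝ) ≤ (theta x t).toReal := le_toNNReal_theta hθ
  exact div_pos (by linarith) (by linarith)

end StairEndpoints

theorem fmap_ne_iff_general (d : ℕ) (x : ℝ≥0 → Fin d → ℝ)
    (hx : IsCadlag x) (t : ℝ≥0) :
    fmap x t ≠ x t ↔
      ConstOn x (Set.Ioo (eta x t) (theta x t).toNNReal) ∧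
      eta x t < t ∧ (t : ℝ≥0∞) < theta x t ∧ theta x t ≠ ⊤ ∧
      (theta x t).toNNReal ∈ disc x := by
  by_cases hη : eta x t < t
  swap
  · simp [fmap_eq_self_of_eta_eq (eta_le.antisymm (not_lt.1 hη)), hη]
  by_cases hθ : theta x t = ⊤
  · simp [fmap_eq_self_of_theta_eq_top hθ, hθ]
  have htθ : (t : ℝ≥0∞) < theta x t ↔ t < (theta x t).toNNReal := by
    rw [← ENNReal.toNNReal_lt_toNNReal ENNReal.coe_ne_top hθ, ENNReal.toNNReal_coe]
  rw [fmap_eq_of_eta_lt (hx.1 _) hη hθ, Ne, add_eq_left, smul_eq_zero,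
    or_iff_right (interpolation_coeff_pos hη hθ).ne', sub_eq_zero, htθ]
  simp only [constOn_Ioo_eta_theta hη, hη, ne_eq, hθ, true_and, not_false_eq_true]
  rcases (le_toNNReal_theta hθ).lt_or_eq with hlt | heq
  · rw [mem_disc_theta_iff hη hlt]
    exact (and_iff_right hlt).symm
  · simp [← heq]

/-- Lemma 2.2: `f(x)(t) ≠ x(t)` iff `x` is constant on `(η_x(t), θ_x(t))`,
`η_x(t) < t < θ_x(t) < ∞` and `θ_x(t) ∈ disc(x)`. -/
theorem fmap_ne_iff (d : ℕ) (hd : 1 ≤ d) (x : ℝ≥0 → Fin d → ℝ)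
    (hx : IsCadlag x) (t : ℝ≥0) :
    fmap x t ≠ x t ↔
      ConstOn x (Set.Ioo (eta x t) (theta x t).toNNReal) ∧
      eta x t < t ∧ (t : ℝ≥0∞) < theta x t ∧ theta x t ≠ ⊤ ∧
      (theta x t).toNNReal ∈ disc x :=
  fmap_ne_iff_general d x hx t
end
end

section
/- For every fixed t ≥ 0, the map x ↦ η_x(t) from D to ℝ is measurable with respect to the Kolmogorov σ-algebra on D and the Borel σ-algebra on ℝ. -/
open scoped NNReal ENNReal Classical
open Filter Topology

noncomputable section

/-! Right-continuity of `x` makes `{s < t | x s ≠ x t}` open to the right, so its supremum is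
already the supremum of its points in a countable dense set. Hence `η(t)` is a countable
supremum of functions each depending on two coordinates of `x`. -/

open Set

theorem DenseRange.exists_mem_Ico_apply_ne_of_continuousWithinAt {ι α β : Type*}
    [TopologicalSpace α] [LinearOrder α] [OrderTopology α] [DenselyOrdered α]
    [TopologicalSpace β] [T1Space β] {f : ι → α} (hf : DenseRange f) {x : α → β} {s t : α}
    (hx : ContinuousWithinAt x (Ici s) s) (hst : s < t) (hne : x s ≠ x t) :
    ∃ i, f i ∈ Ico s t ∧ x (f i) ≠ x t := by
  have hnhds : x ⁻¹' {x t}ᶜ ∈ 𝓝[≥] s := hx (isOpen_compl_singleton.mem_nhds hne)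
  obtain ⟨u, hsu, hIco⟩ := (mem_nhdsGE_iff_exists_Ico_subset' hst).1 hnhds
  obtain ⟨_, ⟨i, rfl⟩, hsi, hiut⟩ := hf.exists_between (lt_min hsu hst)
  exact ⟨i, ⟨hsi.le, hiut.trans_le (min_le_right _ _)⟩,
    hIco ⟨hsi.le, hiut.trans_le (min_le_left _ _)⟩⟩

theorem NNReal.sSup_eq_iSup_indicator {ι : Sort*} {S : Set ℝ≥0} (hS : BddAbove S) (f : ι → ℝ≥0)
    (hf : ∀ s ∈ S, ∃ i, f i ∈ S ∧ s ≤ f i) :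
    sSup S = ⨆ i, S.indicator id (f i) := by
  have hle : ∀ i, S.indicator id (f i) ≤ sSup S := fun i => by
    by_cases hi : f i ∈ S
    · simpa [hi] using le_csSup hS hi
    · simp [hi]
  refine le_antisymm (csSup_le' fun s hs => ?_) (ciSup_le' hle)
  obtain ⟨i, hiS, hsi⟩ := hf s hs
  calc s ≤ f i := hsi
    _ = S.indicator id (f i) := by simp [hiS]
    _ ≤ ⨆ i, S.indicator id (f i) := le_ciSup ⟨sSup S, forall_mem_range.2 hle⟩ i

theorem eta_eq_iSup_indicator {d : ℕ} {x : ℝ≥0 → Fin d → ℝ}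
    (hx : ∀ s, ContinuousWithinAt x (Ici s) s) (t : ℝ≥0) :
    eta x t = ⨆ n, {s | s < t ∧ x s ≠ x t}.indicator id (TopologicalSpace.denseSeq ℝ≥0 n) :=
  NNReal.sSup_eq_iSup_indicator ⟨t, fun _ hs => hs.1.le⟩ _ fun s ⟨hst, hne⟩ =>
    let ⟨n, hn, hne'⟩ := (TopologicalSpace.denseRange_denseSeq ℝ≥0
      ).exists_mem_Ico_apply_ne_of_continuousWithinAt (hx s) hst hne
    ⟨n, ⟨hn.2, hne'⟩, hn.1⟩

theorem measurable_eta_general (d : ℕ) (t : ℝ≥0) :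
    Measurable (fun x : Cadlag d => (eta x.1 t : ℝ)) := by
  have hcoord : ∀ s, Measurable fun x : Cadlag d => x.1 s :=
    fun s => (measurable_pi_apply s).comp (comap_measurable _)
  have hterm : ∀ s : ℝ≥0,
      Measurable fun x : Cadlag d => {u | u < t ∧ x.1 u ≠ x.1 t}.indicator id s := fun s =>
    Measurable.ite ((MeasurableSet.const (s < t)).inter
      (measurableSet_eq_fun (hcoord s) (hcoord t)).compl) measurable_const measurable_const
  have heta : (fun x : Cadlag d => eta x.1 t) = fun x =>
      ⨆ n, {u | u < t ∧ x.1 u ≠ x.1 t}.indicator id (TopologicalSpace.denseSeq ℝ≥0 n) :=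
    funext fun x => eta_eq_iSup_indicator x.2.1 t
  exact measurable_coe_nnreal_real.comp (heta ▸ Measurable.iSup fun n => hterm _)

/-- For every fixed `t ≥ 0`, the map `x ↦ η_x(t)` is measurable from `D` (with the Kolmogorov
σ-algebra) to `ℝ` (with the Borel σ-algebra). -/
theorem measurable_eta (d : ℕ) (hd : 1 ≤ d) (t : ℝ≥0) :
    Measurable (fun x : Cadlag d => (eta x.1 t : ℝ)) :=
  measurable_eta_general d t
end
end

section
/- For every fixed t ≥ 0, the map x ↦ θ_x(t) from D to [0,∞] is measurable with respect to the Kolmogorov σ-algebra on D and the Borel σ-algebra on the extended nonnegative reals. -/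
open scoped NNReal ENNReal Classical
open Filter Topology

noncomputable section

/-! The infimum defining `θ_x(t)` may be taken over rational times only: by right-continuity,
each time `s ≥ t` with `x(s) ≠ x(t−)` is followed by rational times arbitrarily close to it with
the same property. This writes `x ↦ θ_x(t)` as a countable infimum of functions of finitely many
coordinates `x(q)` and of `x(t−)`, which is itself a sequential limit of coordinates. -/

theorem NNReal.exists_nnrat_btwn {a b : ℝ≥0} (h : a < b) : ∃ q : ℚ≥0, a < q ∧ (q : ℝ≥0) < b := by
  obtain ⟨q, haq, hqb⟩ := exists_rat_btwn (NNReal.coe_lt_coe.mpr h)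
  have hq : (0 : ℚ) ≤ q := by exact_mod_cast a.2.trans haq.le
  refine ⟨⟨q, hq⟩, ?_, ?_⟩ <;> rw [← NNReal.coe_lt_coe] <;> simpa

theorem ContinuousWithinAt.exists_nnrat_btwn_mem_preimage {E : Type*} [TopologicalSpace E]
    {x : ℝ≥0 → E} {s b : ℝ≥0} (hx : ContinuousWithinAt x (Set.Ici s) s) {U : Set E}
    (hU : IsOpen U) (hs : x s ∈ U) (hsb : s < b) :
    ∃ q : ℚ≥0, s < q ∧ (q : ℝ≥0) < b ∧ x q ∈ U := by
  obtain ⟨u, hsu, hsub⟩ := mem_nhdsGE_iff_exists_Ico_subset.mp (hx (hU.mem_nhds hs))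
  obtain ⟨q, hsq, hq⟩ := NNReal.exists_nnrat_btwn (lt_min hsu hsb)
  exact ⟨q, hsq, hq.trans_le (min_le_right _ _), hsub ⟨hsq.le, hq.trans_le (min_le_left _ _)⟩⟩

theorem sInf_hittingTimes_eq_iInf_nnrat {E : Type*} [TopologicalSpace E] {x : ℝ≥0 → E}
    (hx : ∀ s, ContinuousWithinAt x (Set.Ici s) s) {U : Set E} (hU : IsOpen U) (t : ℝ≥0) :
    sInf ((fun s : ℝ≥0 => (s : ℝ≥0∞)) '' {s | t ≤ s ∧ x s ∈ U}) =
      ⨅ (q : ℚ≥0) (_ : t ≤ (q : ℝ≥0) ∧ x q ∈ U), ((q : ℝ≥0) : ℝ≥0∞) := by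
  refine le_antisymm (le_iInf₂ fun q hq => sInf_le ⟨q, hq, rfl⟩) (le_sInf ?_)
  · rintro _ ⟨s, ⟨hts, hsU⟩, rfl⟩
    refine ENNReal.le_of_forall_pos_le_add fun ε hε _ => ?_
    obtain ⟨q, hsq, hqε, hqU⟩ :=
      (hx s).exists_nnrat_btwn_mem_preimage hU hsU (lt_add_of_pos_right s hε)
    calc ⨅ (q : ℚ≥0) (_ : t ≤ (q : ℝ≥0) ∧ x q ∈ U), ((q : ℝ≥0) : ℝ≥0∞)
        ≤ ((q : ℝ≥0) : ℝ≥0∞) := iInf₂_le q ⟨hts.trans hsq.le, hqU⟩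
      _ ≤ s + ε := by exact_mod_cast hqε.le

theorem IsCadlag.theta_eq_iInf_nnrat {d : ℕ} {x : ℝ≥0 → Fin d → ℝ} (hx : IsCadlag x)
    (t : ℝ≥0) :
    theta x t = ⨅ (q : ℚ≥0) (_ : t ≤ (q : ℝ≥0) ∧ x q ≠ leftLimit x t), ((q : ℝ≥0) : ℝ≥0∞) :=
  sInf_hittingTimes_eq_iInf_nnrat hx.1 isOpen_ne t

theorem IsCadlag.tendsto_leftLimit {d : ℕ} {x : ℝ≥0 → Fin d → ℝ} (hx : IsCadlag x) {t : ℝ≥0}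
    (ht : 0 < t) : Tendsto x (𝓝[<] t) (𝓝 (leftLimit x t)) := by
  obtain ⟨L, hL⟩ := hx.2 t ht
  have : NeBot (𝓝[<] t) := nhdsLT_neBot_of_exists_lt ⟨0, ht⟩
  rwa [leftLimit, if_pos ht, hL.limUnder_eq]

namespace Cadlag

variable (d : ℕ)

theorem measurable_val : Measurable (fun x : Cadlag d => x.1) :=
  comap_measurable _

theorem measurable_eval (s : ℝ≥0) : Measurable (fun x : Cadlag d => x.1 s) :=
  (measurable_pi_apply s).comp (measurable_val d)

theorem measurable_leftLimit (t : ℝ≥0) : Measurable (fun x : Cadlag d => leftLimit x.1 t) := by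
  by_cases ht : 0 < t
  · have : NeBot (𝓝[<] t) := nhdsLT_neBot_of_exists_lt ⟨0, ht⟩
    obtain ⟨u, hu⟩ := exists_seq_tendsto (𝓝[<] t)
    exact measurable_of_tendsto_metrizable (fun n => measurable_eval d (u n))
      (tendsto_pi_nhds.mpr fun x => (x.2.tendsto_leftLimit ht).comp hu)
  · simp only [leftLimit, if_neg ht]
    exact measurable_eval d 0

end Cadlag

theorem measurable_theta_general (d : ℕ) (t : ℝ≥0) :
    Measurable (fun x : Cadlag d => theta x.1 t) := by
  simp only [fun x : Cadlag d => x.2.theta_eq_iInf_nnrat t, iInf_eq_if]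
  refine Measurable.iInf fun q => Measurable.ite ?_ measurable_const measurable_const
  exact (MeasurableSet.const _).inter
    (measurableSet_eq_fun (Cadlag.measurable_eval d _) (Cadlag.measurable_leftLimit d t)).compl

/-- For every fixed `t ≥ 0`, the map `x ↦ θ_x(t)` is measurable from `D` (with the Kolmogorov
σ-algebra) to `[0,∞]` (with the Borel σ-algebra on the extended nonnegative reals). -/
theorem measurable_theta (d : ℕ) (hd : 1 ≤ d) (t : ℝ≥0) :
    Measurable (fun x : Cadlag d => theta x.1 t) :=
  measurable_theta_general d t
end
end

section
/- For every fixed t ≥ 0, the map x ↦ x(η_x(t)) from D to ℝ^d is measurable with respect to the Kolmogorov σ-algebra on D and the Borel σ-algebra on ℝ^d. -/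
open scoped NNReal ENNReal Classical
open Filter Topology

noncomputable section

theorem eval_eta_eq {d : ℕ} (x : ℝ≥0 → Fin d → ℝ) (hx : IsCadlag x) (t : ℝ≥0) :
    x (eta x t) = x t := by
  set S := {s : ℝ≥0 | s < t ∧ x s ≠ x t} with hS
  have hbdd : BddAbove S := ⟨t, fun s hs => le_of_lt hs.1⟩
  have hle : eta x t ≤ t := by
    rcases Set.eq_empty_or_nonempty S with h | h
    · simp [eta, ← hS, h]
    · exact csSup_le h fun s hs => le_of_lt hs.1
  rcases eq_or_lt_of_le hle with h | hlt
  · rw [h]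
  · have key : ∀ s, eta x t < s → s < t → x s = x t := by
      intro s h1 h2
      by_contra h
      exact absurd (le_csSup hbdd ⟨h2, h⟩) (not_le.2 h1)
    have h1 : Filter.Tendsto x (nhdsWithin (eta x t) (Set.Ioi (eta x t)))
        (nhds (x (eta x t))) :=
      (hx.1 (eta x t)).mono_left (nhdsWithin_mono _ Set.Ioi_subset_Ici_self)
    have h2 : ∀ᶠ s in nhdsWithin (eta x t) (Set.Ioi (eta x t)), x s = x t := by
      filter_upwards [Ioo_mem_nhdsGT_of_mem ⟨le_rfl, hlt⟩] with s hs
      exact key s hs.1 hs.2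
    exact tendsto_nhds_unique (h1.congr' h2) tendsto_const_nhds

/-- For every fixed `t ≥ 0`, the map `x ↦ x(η_x(t))` is measurable from `D` (with the Kolmogorov
σ-algebra) to `ℝ^d` (with the Borel σ-algebra). -/
theorem measurable_eval_eta (d : ℕ) (hd : 1 ≤ d) (t : ℝ≥0) :
    Measurable (fun x : Cadlag d => x.1 (eta x.1 t)) := by
  have h : (fun x : Cadlag d => x.1 (eta x.1 t)) = fun x : Cadlag d => x.1 t := by
    funext x
    exact eval_eta_eq x.1 x.2 t
  rw [h]
  exact (measurable_pi_apply t).comp (measurable_iff_comap_le.mpr le_rfl)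
end
end

section
/- For every fixed t ≥ 0, the map x ↦ f(x)(t) from D to ℝ^d is measurable with respect to the Kolmogorov σ-algebra on D and the Borel σ-algebra on ℝ^d; consequently the map f : D → D is measurable when D carries the Kolmogorov σ-algebra. -/
/-!
By right-continuity, whenever `x s ≠ v` there are points `s' > s` arbitrarily close to `s` in
a fixed countable dense subset of `[0,∞)` with `x s' ≠ v`. Hence `η_x(t)` and `θ_x(t)` are a
countable supremum, resp. infimum, of measurable functions of `x`, and `x(t−)` is the limit of
`x` along a sequence increasing to `t`. Evaluating `x` at a measurable random time `σ` is
measurable because it is the pointwise limit of `x` evaluated at the countably-valued times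
`⌈σ (n + 1)⌉ / (n + 1)`, which decrease to `σ`; this handles `x(η_x(t))` and `x(θ_x(t))`.
-/

open scoped NNReal ENNReal Classical
open Filter Topology

noncomputable section

open TopologicalSpace Set

theorem tendsto_natCeil_mul_div_nhdsGE (s : ℝ≥0) :
    Tendsto (fun n : ℕ => (⌈s * (n + 1)⌉₊ : ℝ≥0) / (n + 1)) atTop (𝓝[≥] s) := by
  have hge (n : ℕ) : s ≤ (⌈s * (n + 1)⌉₊ : ℝ≥0) / (n + 1) :=
    (le_div_iff₀ (by positivity)).2 (Nat.le_ceil _)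
  have hle (n : ℕ) : (⌈s * (n + 1)⌉₊ : ℝ≥0) / (n + 1) ≤ s + 1 / (n + 1) := by
    rw [div_le_iff₀ (by positivity), add_mul, one_div_mul_cancel (by positivity)]
    exact (Nat.ceil_lt_add_one zero_le).le
  have hlim : Tendsto (fun n : ℕ => s + 1 / ((n : ℝ≥0) + 1)) atTop (𝓝 s) := by
    simpa using (tendsto_const_nhds (x := s)).add
      (tendsto_one_div_add_atTop_nhds_zero_nat (𝕜 := ℝ≥0))
  exact tendsto_nhdsWithin_of_tendsto_nhds_of_eventually_within _
    (tendsto_of_tendsto_of_tendsto_of_le_of_le tendsto_const_nhds hlim hge hle)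
    (Eventually.of_forall hge)

theorem measurable_apply_of_continuousWithinAt_Ici {α E : Type*} [MeasurableSpace α]
    [TopologicalSpace E] [PseudoMetrizableSpace E] [MeasurableSpace E] [BorelSpace E]
    {X : α → ℝ≥0 → E} (hXm : ∀ s, Measurable fun a => X a s)
    (hX : ∀ a s, ContinuousWithinAt (X a) (Ici s) s) {σ : α → ℝ≥0} (hσ : Measurable σ) :
    Measurable fun a => X a (σ a) := by
  refine measurable_of_tendsto_metrizable' atTop
    (f := fun (n : ℕ) a => X a ((⌈σ a * (n + 1)⌉₊ : ℝ≥0) / (n + 1))) (fun n => ?_)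
    (tendsto_pi_nhds.2 fun a => (hX a (σ a)).tendsto.comp
      (tendsto_natCeil_mul_div_nhdsGE (σ a)))
  have hk : Measurable fun a => ⌈σ a * (n + 1)⌉₊ := (hσ.mul_const _).nat_ceil
  exact (measurable_from_prod_countable_left (f := fun p : α × ℕ => X p.1 (p.2 / (n + 1)))
    fun k => hXm (k / (n + 1))).comp (measurable_id.prodMk hk)

theorem exists_denseSeq_mem_Ioo_ne {E : Type*} [TopologicalSpace E] [T1Space E]
    {x : ℝ≥0 → E} {s b : ℝ≥0} (hx : ContinuousWithinAt x (Ici s) s) (hsb : s < b) {v : E}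
    (hv : x s ≠ v) : ∃ n, denseSeq ℝ≥0 n ∈ Ioo s b ∧ x (denseSeq ℝ≥0 n) ≠ v := by
  obtain ⟨c, hc, hsub⟩ := (mem_nhdsGE_iff_exists_mem_Ioc_Ico_subset hsb).1
    (hx.eventually (isOpen_ne.eventually_mem hv))
  obtain ⟨n, hn⟩ := (denseRange_denseSeq ℝ≥0).exists_mem_open isOpen_Ioo (nonempty_Ioo.2 hc.1)
  exact ⟨n, ⟨hn.1, hn.2.trans_le hc.2⟩, hsub ⟨hn.1.le, hn.2⟩⟩

section RightContinuous

variable {d : ℕ} {x : ℝ≥0 → Fin d → ℝ}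

theorem eta_eq_iSup (hx : ∀ s, ContinuousWithinAt x (Ici s) s) (t : ℝ≥0) :
    eta x t = ⨆ n, if denseSeq ℝ≥0 n < t ∧ x (denseSeq ℝ≥0 n) ≠ x t
      then denseSeq ℝ≥0 n else 0 := by
  have hbdd : BddAbove (range fun n =>
      if denseSeq ℝ≥0 n < t ∧ x (denseSeq ℝ≥0 n) ≠ x t then denseSeq ℝ≥0 n else 0) := by
    refine ⟨t, forall_mem_range.2 fun n => ?_⟩
    split_ifs with h
    exacts [h.1.le, zero_le]
  refine le_antisymm (csSup_le' fun s hs => ?_) (ciSup_le' fun n => ?_)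
  · obtain ⟨n, hn, hne⟩ := exists_denseSeq_mem_Ioo_ne (hx s) hs.1 hs.2
    refine hn.1.le.trans (le_ciSup_of_le hbdd n ?_)
    rw [if_pos ⟨hn.2, hne⟩]
  · split_ifs with h
    exacts [le_csSup ⟨t, fun s hs => hs.1.le⟩ h, zero_le]

theorem theta_eq_iInf (hx : ∀ s, ContinuousWithinAt x (Ici s) s) (t : ℝ≥0) :
    theta x t = ⨅ n, if t ≤ denseSeq ℝ≥0 n ∧ x (denseSeq ℝ≥0 n) ≠ leftLimit x t
      then (denseSeq ℝ≥0 n : ℝ≥0∞) else ⊤ := by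
  refine le_antisymm (le_iInf fun n => ?_) (le_sInf ?_)
  · split_ifs with h
    exacts [sInf_le ⟨_, h, rfl⟩, le_top]
  · rintro _ ⟨s, hs, rfl⟩
    refine ENNReal.le_of_forall_pos_le_add fun ε hε _ => ?_
    obtain ⟨n, hn, hne⟩ := exists_denseSeq_mem_Ioo_ne (hx s) (lt_add_of_pos_right s hε) hs.2
    refine (iInf_le _ n).trans ?_
    rw [if_pos ⟨hs.1.trans hn.1.le, hne⟩, ← ENNReal.coe_add, ENNReal.coe_le_coe]
    exact hn.2.le

end RightContinuous

theorem IsCadlag.tendsto_leftLimit_s11 {d : ℕ} {x : ℝ≥0 → Fin d → ℝ} (hx : IsCadlag x) (t : ℝ≥0) :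
    Tendsto (fun n : ℕ => x (t - t / (n + 1))) atTop (𝓝 (leftLimit x t)) := by
  rcases eq_zero_or_pos t with rfl | ht
  · simp [leftLimit]
  obtain ⟨L, hL⟩ := hx.2 t ht
  have : (𝓝[<] t).NeBot := nhdsLT_neBot_of_exists_lt ⟨0, ht⟩
  rw [leftLimit, if_pos ht, hL.limUnder_eq]
  refine hL.comp (tendsto_nhdsWithin_of_tendsto_nhds_of_eventually_within _ ?_
    (Eventually.of_forall fun n => tsub_lt_self ht (by positivity)))
  simpa [div_eq_mul_inv] using tendsto_const_nhds.sub
    ((tendsto_one_div_add_atTop_nhds_zero_nat (𝕜 := ℝ≥0)).const_mul t)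

section MeasurableFamily

variable {α : Type*} [MeasurableSpace α] {d : ℕ} {X : α → ℝ≥0 → Fin d → ℝ}

theorem measurable_leftLimit (hX : ∀ a, IsCadlag (X a)) (hXm : ∀ s, Measurable fun a => X a s)
    (t : ℝ≥0) : Measurable fun a => leftLimit (X a) t :=
  measurable_of_tendsto_metrizable' atTop (fun _ => hXm _)
    (tendsto_pi_nhds.2 fun a => (hX a).tendsto_leftLimit_s11 t)

theorem measurable_eta_s11 (hX : ∀ a s, ContinuousWithinAt (X a) (Ici s) s)
    (hXm : ∀ s, Measurable fun a => X a s) (t : ℝ≥0) : Measurable fun a => eta (X a) t := by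
  simp_rw [eta_eq_iSup (hX _)]
  exact .iSup fun n => .ite ((MeasurableSet.const _).inter
    (measurableSet_eq_fun (hXm _) (hXm t)).compl) measurable_const measurable_const

theorem measurable_theta_s11 (hX : ∀ a, IsCadlag (X a)) (hXm : ∀ s, Measurable fun a => X a s)
    (t : ℝ≥0) : Measurable fun a => theta (X a) t := by
  simp_rw [theta_eq_iInf (hX _).1]
  exact .iInf fun n => .ite ((MeasurableSet.const _).inter
    (measurableSet_eq_fun (hXm _) (measurable_leftLimit hX hXm t)).compl)
    measurable_const measurable_const

theorem measurable_fmap_apply (hX : ∀ a, IsCadlag (X a)) (hXm : ∀ s, Measurable fun a => X a s)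
    (t : ℝ≥0) : Measurable fun a => fmap (X a) t := by
  have hη := measurable_eta_s11 (fun a => (hX a).1) hXm t
  have hθ := measurable_theta_s11 hX hXm t
  have hXη := measurable_apply_of_continuousWithinAt_Ici hXm (fun a => (hX a).1) hη
  have hXθ := measurable_apply_of_continuousWithinAt_Ici hXm (fun a => (hX a).1)
    (ENNReal.measurable_toNNReal.comp hθ)
  refine .ite ((measurableSet_eq_fun hθ hη.coe_nnreal_ennreal).union
    (measurableSet_eq_fun hθ measurable_const)) (hXm t) ?_
  have hηr := hη.coe_nnreal_real
  exact hXη.add (((measurable_const.sub hηr).div (hθ.ennreal_toReal.sub hηr)).smul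
    (hXθ.sub hXη))

end MeasurableFamily

theorem measurable_fmap_general (d : ℕ) :
    (∀ t : ℝ≥0, Measurable (fun x : Cadlag d => fmap x.1 t)) ∧
    Measurable (fun x : Cadlag d => fmap x.1) := by
  have hval : Measurable fun x : Cadlag d => x.1 := Measurable.of_comap_le le_rfl
  have key (t : ℝ≥0) : Measurable fun x : Cadlag d => fmap x.1 t :=
    measurable_fmap_apply (fun x => x.2) (fun s => (measurable_pi_apply s).comp hval) t
  exact ⟨key, measurable_pi_lambda _ key⟩

/-- For every fixed `t ≥ 0`, the map `x ↦ f(x)(t)` is measurable from `D` (with the Kolmogorov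
σ-algebra) to `ℝ^d`; consequently `f` is measurable as a map into the space of functions
`[0,∞) → ℝ^d` carrying the Kolmogorov σ-algebra. -/
theorem measurable_fmap (d : ℕ) (hd : 1 ≤ d) :
    (∀ t : ℝ≥0, Measurable (fun x : Cadlag d => fmap x.1 t)) ∧
    Measurable (fun x : Cadlag d => fmap x.1) :=
  measurable_fmap_general d
end
end

section
/- Let y : [0,∞) → [0,∞) be nondecreasing, right-continuous, unbounded above, with y(0) = 0. Then for every t ≥ 0, ((y ∘ y^{-1})^{-1})(t) = ((y^− ∘ (y^{-1})^−))^+(t), i.e. the generalized inverse of the composed function y ∘ y^{-1} evaluated at t equals the right limit at t of the function u ↦ y^−((y^{-1})^−(u)). -/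
/-!
Write `g = y⁻¹` and `h = y⁻ ∘ g⁻`. Right continuity gives `s ≤ y (g s)`, so `y x < u` forces
`x < g v` for some `v < u`, whence `y x ≤ h u`. For `t < u` and `h u < s` this rules out
`y (g s) ≤ t` (it would give `s ≤ y (g s) ≤ h u`), so `(y ∘ g)⁻¹ t ≤ h u`. Conversely, if
`t < y (g s)` then `h⁺ t ≤ h (y (g s)) ≤ y⁻ (g s) ≤ s`, because `g ≤ g s` below `y (g s)` and
`y ≤ s` below `g s`.
-/

open scoped NNReal
open Filter Topology Function

noncomputable section

/-- The generalized (right-continuous) inverse `y⁻¹(t) = inf {s > 0 : y(s) > t}` of a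
nondecreasing, right-continuous, unbounded function `y : [0,∞) → [0,∞)`. -/
def ginv (y : ℝ≥0 → ℝ≥0) (t : ℝ≥0) : ℝ≥0 :=
  sInf {s : ℝ≥0 | 0 < s ∧ t < y s}

theorem Monotone.leftLim_le_of_forall_lt {α β : Type*} [LinearOrder α] [TopologicalSpace α]
    [OrderTopology α] [ConditionallyCompleteLinearOrder β] [TopologicalSpace β]
    [OrderTopology β] {f : α → β} (hf : Monotone f) {x : α} {c : β} [(𝓝[<] x).NeBot]
    (h : ∀ u < x, f u ≤ c) : leftLim f x ≤ c :=
  _root_.le_of_tendsto (hf.tendsto_leftLim x) (eventually_nhdsWithin_of_forall h)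

section ginv

variable {y : ℝ≥0 → ℝ≥0} {s t u x : ℝ≥0}

theorem ginv_le_of_forall_lt (h : ∀ s, x < s → t < y s) : ginv y t ≤ x :=
  le_of_forall_gt_imp_ge_of_dense fun s hs =>
    csInf_le (OrderBot.bddBelow _) ⟨hs.pos, h s hs⟩

theorem ginv_le_of_lt_apply (h0 : y 0 = 0) (h : t < y s) : ginv y t ≤ s := by
  have hs : 0 < s := pos_of_ne_zero <| by rintro rfl; simp [h0] at h
  exact csInf_le (OrderBot.bddBelow _) ⟨hs, h⟩

theorem apply_le_of_lt_ginv (h0 : y 0 = 0) (h : x < ginv y s) : y x ≤ s :=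
  le_of_not_gt fun hlt => (ginv_le_of_lt_apply h0 hlt).not_gt h

variable (hmono : Monotone y)
include hmono

theorem leftLim_le_of_le_ginv (h0 : y 0 = 0) (h : x ≤ ginv y s) : leftLim y x ≤ s := by
  rcases eq_zero_or_pos x with rfl | hx
  · rw [leftLim_eq_of_isBot isBot_zero, h0]
    exact zero_le
  · have : (𝓝[<] x).NeBot := nhdsLT_neBot_of_exists_lt ⟨0, hx⟩
    exact hmono.leftLim_le_of_forall_lt fun u hu => apply_le_of_lt_ginv h0 (hu.trans_le h)

variable (hub : ∀ M : ℝ≥0, ∃ s : ℝ≥0, M < y s)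
include hub

theorem lt_apply_of_ginv_lt (h : ginv y t < s) : t < y s := by
  obtain ⟨σ, hσ⟩ := hub t
  have hne : {s : ℝ≥0 | 0 < s ∧ t < y s}.Nonempty :=
    ⟨σ + 1, by positivity, hσ.trans_le (hmono le_self_add)⟩
  obtain ⟨a, ⟨-, ha⟩, has⟩ := exists_lt_of_csInf_lt hne h
  exact ha.trans_le (hmono has.le)

theorem monotone_ginv : Monotone (ginv y) := fun _ _ hab =>
  ginv_le_of_forall_lt fun _ hs => hab.trans_lt (lt_apply_of_ginv_lt hmono hub hs)

theorem leftLim_ginv_apply_le (h0 : y 0 = 0) (hx : 0 < y x) : leftLim (ginv y) (y x) ≤ x :=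
  have : (𝓝[<] (y x)).NeBot := nhdsLT_neBot_of_exists_lt ⟨0, hx⟩
  (monotone_ginv hmono hub).leftLim_le_of_forall_lt fun _ hu => ginv_le_of_lt_apply h0 hu

variable (hrc : ∀ t : ℝ≥0, ContinuousWithinAt y (Set.Ici t) t)
include hrc

theorem le_apply_ginv (t : ℝ≥0) : t ≤ y (ginv y t) :=
  ge_of_tendsto ((hrc _).tendsto.mono_left (nhdsWithin_mono _ Set.Ioi_subset_Ici_self)) <|
    eventually_nhdsWithin_of_forall fun _ hs => (lt_apply_of_ginv_lt hmono hub hs).le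

theorem lt_ginv_of_apply_lt (h : y x < u) : x < ginv y u :=
  lt_of_not_ge fun hle => (le_apply_ginv hmono hub hrc u |>.trans (hmono hle)).not_gt h

theorem apply_le_leftLim_leftLim_ginv (h : y x < u) :
    y x ≤ leftLim y (leftLim (ginv y) u) := by
  obtain ⟨v, hxv, hvu⟩ := exists_between h
  exact hmono.le_leftLim <| (lt_ginv_of_apply_lt hmono hub hrc hxv).trans_le <|
    (monotone_ginv hmono hub).le_leftLim hvu

end ginv

/-- Lemma 5.1: for `y : [0,∞) → [0,∞)` nondecreasing, right-continuous, unbounded above with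
`y(0) = 0`, one has `(y ∘ y⁻¹)⁻¹ = (y⁻ ∘ (y⁻¹)⁻)⁺` pointwise: the generalized inverse of
`y ∘ y⁻¹` at `t` equals the right limit at `t` of `u ↦ y⁻((y⁻¹)⁻(u))`. -/
theorem ginv_comp_eq_rightLim (y : ℝ≥0 → ℝ≥0) (hmono : Monotone y)
    (hrc : ∀ t : ℝ≥0, ContinuousWithinAt y (Set.Ici t) t)
    (hub : ∀ M : ℝ≥0, ∃ s : ℝ≥0, M < y s) (h0 : y 0 = 0) (t : ℝ≥0) :
    ginv (fun s => y (ginv y s)) t =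
      Function.rightLim (fun u => Function.leftLim y (Function.leftLim (ginv y) u)) t := by
  set h : ℝ≥0 → ℝ≥0 := fun u => leftLim y (leftLim (ginv y) u)
  have hh : Monotone h := hmono.leftLim.comp (monotone_ginv hmono hub).leftLim
  have le_comp := le_apply_ginv hmono hub hrc
  refine le_antisymm ?_ ?_
  · refine ge_of_tendsto (hh.tendsto_rightLim t) <| eventually_nhdsWithin_of_forall fun u hu => ?_
    refine ginv_le_of_forall_lt fun s hs => lt_of_not_ge fun hst => ?_
    have : y (ginv y s) ≤ h u := apply_le_leftLim_leftLim_ginv hmono hub hrc (hst.trans_lt hu)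
    exact ((le_comp s).trans this).not_gt hs
  · refine le_csInf ⟨t + 1, by positivity, (lt_add_one t).trans_le (le_comp _)⟩ ?_
    rintro s ⟨-, hts⟩
    calc rightLim h t ≤ h (y (ginv y s)) := hh.rightLim_le hts
      _ ≤ s := leftLim_le_of_le_ginv hmono h0 <|
        leftLim_ginv_apply_le hmono hub h0 hts.pos
end
end

section
/- Let y : [0,∞) → [0,∞) be nondecreasing, right-continuous, unbounded above. Let τ > 0 be a discontinuity point of y, i.e. y(τ−) < y(τ), and let t ∈ [y(τ−), y(τ)). Then ((y^− ∘ (y^{-1})^−))^+(t) = y(τ−), i.e. the right limit at t of the function u ↦ y^−((y^{-1})^−(u)) equals y(τ−). -/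
/-!
Strictly left of `τ` the function `y` stays below `y(τ−)`, so for `u` in the jump interval
`[y(τ−), y(τ))` the set `{s > 0 : y s > u}` is exactly `[τ, ∞)` and `y⁻¹ u = τ`. Hence
`(y⁻¹)⁻ = τ` on `(y(τ−), y(τ)]`, and `u ↦ y⁻((y⁻¹)⁻ u)` is constantly `y(τ−)` just to the
right of `t`.
-/

open scoped NNReal
open Filter Topology Function

noncomputable section

open Set

section OneSidedLimits

variable {α β : Type*} [LinearOrder α] [TopologicalSpace α] [OrderTopology α]
  [DenselyOrdered α] [TopologicalSpace β] [T2Space β] {f : α → β} {a b : α} {c : β}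

theorem leftLim_eq_of_eqOn_Ioo (hba : b < a) (h : EqOn f (fun _ => c) (Ioo b a)) :
    leftLim f a = c :=
  haveI := nhdsLT_neBot_of_exists_lt ⟨b, hba⟩
  leftLim_eq_of_tendsto <|
    tendsto_const_nhds.congr' (eventuallyEq_of_mem (Ioo_mem_nhdsLT hba) h).symm

theorem rightLim_eq_of_eqOn_Ioo (hab : a < b) (h : EqOn f (fun _ => c) (Ioo a b)) :
    rightLim f a = c :=
  haveI := nhdsGT_neBot_of_exists_gt ⟨b, hab⟩
  rightLim_eq_of_tendsto <|
    tendsto_const_nhds.congr' (eventuallyEq_of_mem (Ioo_mem_nhdsGT hab) h).symm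

end OneSidedLimits

section GeneralizedInverse

variable {y : ℝ≥0 → ℝ≥0} {τ u : ℝ≥0}

theorem setOf_pos_lt_eq_Ici (hy : Monotone y) (hτ : 0 < τ)
    (hu : u ∈ Ico (leftLim y τ) (y τ)) : {s : ℝ≥0 | 0 < s ∧ u < y s} = Ici τ := by
  ext s
  constructor
  · rintro ⟨-, hus⟩
    refine mem_Ici.mpr (not_lt.mp fun hsτ => ?_)
    exact (hus.trans_le ((hy.le_leftLim hsτ).trans hu.1)).false
  · intro hτs
    exact ⟨hτ.trans_le hτs, hu.2.trans_le (hy hτs)⟩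

theorem ginv_eq_of_mem_Ico (hy : Monotone y) (hτ : 0 < τ)
    (hu : u ∈ Ico (leftLim y τ) (y τ)) : ginv y u = τ := by
  rw [ginv, setOf_pos_lt_eq_Ici hy hτ hu, csInf_Ici]

theorem leftLim_ginv_eq_of_mem_Ioc (hy : Monotone y) (hτ : 0 < τ)
    (hu : u ∈ Ioc (leftLim y τ) (y τ)) : leftLim (ginv y) u = τ :=
  leftLim_eq_of_eqOn_Ioo hu.1 fun _ hv =>
    ginv_eq_of_mem_Ico hy hτ ⟨hv.1.le, hv.2.trans_le hu.2⟩

end GeneralizedInverse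

theorem rightLim_eq_leftLim_of_jump_general (y : ℝ≥0 → ℝ≥0) (hmono : Monotone y)
    (τ : ℝ≥0) (hτ : 0 < τ)
    (t : ℝ≥0) (ht : t ∈ Set.Ico (Function.leftLim y τ) (y τ)) :
    Function.rightLim (fun u => Function.leftLim y (Function.leftLim (ginv y) u)) t =
      Function.leftLim y τ :=
  rightLim_eq_of_eqOn_Ioo ht.2 fun u hu => by
    simp only [leftLim_ginv_eq_of_mem_Ioc hmono hτ ⟨ht.1.trans_lt hu.1, hu.2.le⟩]

/-- If `τ > 0` is a discontinuity point of `y` (i.e. `y(τ−) < y(τ)`) and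
`t ∈ [y(τ−), y(τ))`, then the right limit at `t` of `u ↦ y⁻((y⁻¹)⁻(u))` equals `y(τ−)`. -/
theorem rightLim_eq_leftLim_of_jump (y : ℝ≥0 → ℝ≥0) (hmono : Monotone y)
    (hrc : ∀ t : ℝ≥0, ContinuousWithinAt y (Set.Ici t) t)
    (hub : ∀ M : ℝ≥0, ∃ s : ℝ≥0, M < y s)
    (τ : ℝ≥0) (hτ : 0 < τ) (hjump : Function.leftLim y τ < y τ)
    (t : ℝ≥0) (ht : t ∈ Set.Ico (Function.leftLim y τ) (y τ)) :
    Function.rightLim (fun u => Function.leftLim y (Function.leftLim (ginv y) u)) t =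
      Function.leftLim y τ :=
  rightLim_eq_leftLim_of_jump_general y hmono τ hτ t ht
end
end

section
/- Let y : [0,∞) → [0,∞) be nondecreasing, right-continuous, unbounded above, with y(0) = 0. Suppose t ≥ 0 does not belong to any interval [y(τ−), y(τ)) with τ a discontinuity point of y. Then ((y^− ∘ (y^{-1})^−))^+(t) = t, i.e. the right limit at t of the function u ↦ y^−((y^{-1})^−(u)) equals t. -/
open scoped NNReal
open Filter Topology Function

noncomputable section

namespace Monotone

variable {α β : Type*} [LinearOrder α] [TopologicalSpace α] [OrderTopology α]
  [ConditionallyCompleteLinearOrder β] [TopologicalSpace β] [OrderTopology β]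
  {f : α → β} {a : α} {c : β}

theorem leftLim_le_of_forall_lt_s15 (hf : Monotone f) [(𝓝[<] a).NeBot] (h : ∀ s < a, f s ≤ c) :
    leftLim f a ≤ c :=
  _root_.le_of_tendsto (hf.tendsto_leftLim a) (eventually_nhdsWithin_of_forall h)

theorem exists_lt_of_lt_leftLim (hf : Monotone f) [(𝓝[<] a).NeBot] (h : c < leftLim f a) :
    ∃ s < a, c < f s := by
  by_contra! hle
  exact (hf.leftLim_le_of_forall_lt_s15 hle).not_gt h

end Monotone

section GeneralizedInverse

variable {y : ℝ≥0 → ℝ≥0}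

theorem ginv_set_nonempty (hmono : Monotone y) (hub : ∀ M : ℝ≥0, ∃ s : ℝ≥0, M < y s) (t : ℝ≥0) :
    {s : ℝ≥0 | 0 < s ∧ t < y s}.Nonempty := by
  obtain ⟨s, hs⟩ := hub t
  exact ⟨s + 1, add_pos_of_nonneg_of_pos zero_le one_pos, hs.trans_le (hmono le_self_add)⟩

theorem monotone_ginv_s15 (hmono : Monotone y) (hub : ∀ M : ℝ≥0, ∃ s : ℝ≥0, M < y s) :
    Monotone (ginv y) := fun _ b hab =>
  csInf_le_csInf (OrderBot.bddBelow _) (ginv_set_nonempty hmono hub b)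
    fun _ hs => ⟨hs.1, hab.trans_lt hs.2⟩

theorem apply_le_of_lt_ginv_s15 (hmono : Monotone y) {s v : ℝ≥0} (hs : s < ginv y v) : y s ≤ v := by
  by_contra! hv
  obtain ⟨r, hsr, hr⟩ := exists_between hs
  have hr_mem : r ∈ {s : ℝ≥0 | 0 < s ∧ v < y s} :=
    ⟨(zero_le).trans_lt hsr, hv.trans_le (hmono hsr.le)⟩
  exact (csInf_le (OrderBot.bddBelow _) hr_mem).not_gt hr

theorem le_apply_ginv_s15 (hmono : Monotone y) (hrc : ∀ t : ℝ≥0, ContinuousWithinAt y (Set.Ici t) t)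
    (hub : ∀ M : ℝ≥0, ∃ s : ℝ≥0, M < y s) (v : ℝ≥0) : v ≤ y (ginv y v) := by
  set S := {s : ℝ≥0 | 0 < s ∧ v < y s}
  have hS : S ⊆ Set.Ici (ginv y v) := fun s hs => csInf_le (OrderBot.bddBelow _) hs
  have : (𝓝[S] ginv y v).NeBot := mem_closure_iff_nhdsWithin_neBot.1 <|
    csInf_mem_closure (ginv_set_nonempty hmono hub v) (OrderBot.bddBelow _)
  exact ge_of_tendsto ((hrc _).mono hS) (eventually_nhdsWithin_of_forall fun s hs => hs.2.le)

theorem le_apply_leftLim_ginv (hmono : Monotone y)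
    (hrc : ∀ t : ℝ≥0, ContinuousWithinAt y (Set.Ici t) t)
    (hub : ∀ M : ℝ≥0, ∃ s : ℝ≥0, M < y s) (u : ℝ≥0) : u ≤ y (leftLim (ginv y) u) :=
  le_of_forall_lt_imp_le_of_dense fun v hv =>
    (le_apply_ginv_s15 hmono hrc hub v).trans (hmono ((monotone_ginv_s15 hmono hub).le_leftLim hv))

theorem leftLim_apply_leftLim_ginv_le (hmono : Monotone y) (hub : ∀ M : ℝ≥0, ∃ s : ℝ≥0, M < y s)
    (h0 : y 0 = 0) {u : ℝ≥0} (hu : 0 < u) : leftLim y (leftLim (ginv y) u) ≤ u := by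
  rcases eq_zero_or_pos (leftLim (ginv y) u) with ha | ha
  · rw [ha, leftLim_eq_of_isBot fun _ => zero_le, h0]
    exact zero_le
  have := nhdsLT_neBot_of_exists_lt ⟨0, ha⟩
  have := nhdsLT_neBot_of_exists_lt ⟨0, hu⟩
  refine hmono.leftLim_le_of_forall_lt_s15 fun s hs => ?_
  obtain ⟨v, hvu, hsv⟩ := (monotone_ginv_s15 hmono hub).exists_lt_of_lt_leftLim hs
  exact (apply_le_of_lt_ginv_s15 hmono hsv).trans hvu.le

theorem le_leftLim_apply_leftLim_ginv (hmono : Monotone y)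
    (hrc : ∀ t : ℝ≥0, ContinuousWithinAt y (Set.Ici t) t)
    (hub : ∀ M : ℝ≥0, ∃ s : ℝ≥0, M < y s) {t u : ℝ≥0}
    (ht : ¬ ∃ τ : ℝ≥0, 0 < τ ∧ leftLim y τ ≠ y τ ∧ t ∈ Set.Ico (leftLim y τ) (y τ))
    (htu : t < u) : t ≤ leftLim y (leftLim (ginv y) u) := by
  set a := leftLim (ginv y) u
  have hta : t < y a := htu.trans_le (le_apply_leftLim_ginv hmono hrc hub u)
  by_cases hjump : leftLim y a = y a
  · exact hjump ▸ hta.le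
  by_contra! hlt
  have ha : 0 < a := pos_of_ne_zero fun ha => hjump (ha ▸ leftLim_eq_of_isBot fun _ => zero_le)
  exact ht ⟨a, ha, hjump, hlt.le, hta⟩

end GeneralizedInverse

/-- If `t ≥ 0` belongs to no interval `[y(τ−), y(τ))` with `τ` a discontinuity point of `y`,
then the right limit at `t` of `u ↦ y⁻((y⁻¹)⁻(u))` equals `t`. -/
theorem rightLim_eq_self_of_not_jump (y : ℝ≥0 → ℝ≥0) (hmono : Monotone y)
    (hrc : ∀ t : ℝ≥0, ContinuousWithinAt y (Set.Ici t) t)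
    (hub : ∀ M : ℝ≥0, ∃ s : ℝ≥0, M < y s) (h0 : y 0 = 0) (t : ℝ≥0)
    (ht : ¬ ∃ τ : ℝ≥0, 0 < τ ∧ Function.leftLim y τ ≠ y τ ∧
      t ∈ Set.Ico (Function.leftLim y τ) (y τ)) :
    Function.rightLim (fun u => Function.leftLim y (Function.leftLim (ginv y) u)) t = t := by
  have lower : ∀ᶠ u in 𝓝[>] t, t ≤ leftLim y (leftLim (ginv y) u) :=
    eventually_nhdsWithin_of_forall fun _ hu => le_leftLim_apply_leftLim_ginv hmono hrc hub ht hu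
  have upper : ∀ᶠ u in 𝓝[>] t, leftLim y (leftLim (ginv y) u) ≤ u :=
    eventually_nhdsWithin_of_forall fun _ hu =>
      leftLim_apply_leftLim_ginv_le hmono hub h0 ((zero_le).trans_lt hu)
  exact rightLim_eq_of_tendsto <|
    tendsto_of_tendsto_of_tendsto_of_le_of_le' tendsto_const_nhds
      (tendsto_nhdsWithin_of_tendsto_nhds tendsto_id) lower upper
end
end
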